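/- arXiv:2403.19643 — 4 statements merged into one kernel-verified Lean document; each statement's English description precedes it below -/
import Mathlib

section
/- The Hermitian n×n matrix X with diagonal entries X_{jj} = 1/2 and off-diagonal entries X_{jk} = i/(2^j 3^k) for j < k (and X_{kj} = conj(X_{jk})) is positive semi-definite. -/
/-!
Every Gershgorin disc of `X` is centred at `1/2`, and since the off-diagonal entry in column `j`
has modulus at most `3^{-(j+1)}`, its radius is at most `∑_{j ≥ 1} 3^{-j} = 1/2`. The eigenvalues
of the Hermitian matrix `X` are real, so they all lie in `[0, 1]`.
-/

open Complex
open scoped ComplexOrder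

namespace Matrix

variable {𝕜 ι : Type*} [RCLike 𝕜] [Fintype ι] [DecidableEq ι]

theorem IsHermitian.posSemidef_of_sum_row_le_diag {A : Matrix ι ι 𝕜} (hA : A.IsHermitian)
    (hdom : ∀ k, ∑ j ∈ Finset.univ.erase k, ‖A k j‖ ≤ RCLike.re (A k k)) : A.PosSemidef := by
  refine hA.posSemidef_iff_eigenvalues_nonneg.mpr fun i => show 0 ≤ hA.eigenvalues i from ?_
  have hev : Module.End.HasEigenvalue (toLin' A) (hA.eigenvalues i : 𝕜) := by
    rw [Module.End.hasEigenvalue_iff_mem_spectrum, spectrum_toLin']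
    exact spectrum.algebraMap_mem 𝕜 (hA.eigenvalues_mem_spectrum_real i)
  obtain ⟨k, hk⟩ := eigenvalue_mem_ball hev
  rw [mem_closedBall_iff_norm'] at hk
  have hre : RCLike.re (A k k - hA.eigenvalues i) ≤ ‖A k k - hA.eigenvalues i‖ :=
    RCLike.re_le_norm _
  simp only [map_sub, RCLike.ofReal_re] at hre
  linarith [hdom k]

end Matrix

lemma sum_inv_three_pow_succ_le (n : ℕ) : ∑ j : Fin n, ((3 : ℝ) ^ ((j : ℕ) + 1))⁻¹ ≤ 1 / 2 := by
  rw [Fin.sum_univ_eq_sum_range (fun j => ((3 : ℝ) ^ (j + 1))⁻¹)]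
  calc ∑ j ∈ Finset.range n, ((3 : ℝ) ^ (j + 1))⁻¹
      = 3⁻¹ * ∑ j ∈ Finset.range n, (3 : ℝ)⁻¹ ^ j := by
        rw [Finset.mul_sum]; simp [pow_succ, inv_pow, mul_comm]
    _ ≤ 3⁻¹ * ((3 : ℝ)⁻¹ ^ 0 / (1 - 3⁻¹)) := by
        rw [Finset.range_eq_Ico]; gcongr; exact geom_sum_Ico_le_of_lt_one (by norm_num) (by norm_num)
    _ = 1 / 2 := by norm_num

lemma norm_I_div_two_pow_mul_three_pow_le (a b : ℕ) :
    ‖I / (2 ^ a * 3 ^ b)‖ ≤ ((3 : ℝ) ^ b)⁻¹ := by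
  rw [norm_div, norm_I, norm_mul, norm_pow, norm_pow, RCLike.norm_ofNat, RCLike.norm_ofNat, one_div]
  gcongr
  exact le_mul_of_one_le_left (by positivity) (one_le_pow₀ (by norm_num))

/-- The Hermitian matrix with diagonal entries `1/2` and off-diagonal entries
`i/(2^j 3^k)` for `j < k` (and conjugates below the diagonal) is positive semi-definite. -/
theorem stmt_7 {n : ℕ} (X : Matrix (Fin n) (Fin n) ℂ)
    (hX : ∀ j k : Fin n, X j k =
        if j = k then 1 / 2
        else if (j : ℕ) < (k : ℕ) then I / (2 ^ ((j : ℕ) + 1) * 3 ^ ((k : ℕ) + 1))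
        else -(I / (2 ^ ((k : ℕ) + 1) * 3 ^ ((j : ℕ) + 1)))) :
    X.PosSemidef := by
  have hherm : X.IsHermitian := Matrix.IsHermitian.ext fun j k => by
    rcases lt_trichotomy j k with h | rfl | h
    · simp [hX, h.ne, h.ne', h, h.not_gt, neg_div]
    · simp [hX]
    · simp [hX, h.ne, h.ne', h, h.not_gt, neg_div]
  have hoff : ∀ j k, j ≠ k → ‖X k j‖ ≤ ((3 : ℝ) ^ ((j : ℕ) + 1))⁻¹ := by
    intro j k hjk
    rw [hX, if_neg hjk.symm]
    split_ifs with hkj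
    · exact norm_I_div_two_pow_mul_three_pow_le _ _
    · rw [norm_neg]
      exact (norm_I_div_two_pow_mul_three_pow_le _ _).trans
        (inv_anti₀ (by positivity) (pow_le_pow_right₀ (by norm_num) (by omega)))
  refine hherm.posSemidef_of_sum_row_le_diag fun k => ?_
  calc ∑ j ∈ Finset.univ.erase k, ‖X k j‖
      ≤ ∑ j ∈ Finset.univ.erase k, ((3 : ℝ) ^ ((j : ℕ) + 1))⁻¹ :=
        Finset.sum_le_sum fun j hj => hoff j k (Finset.ne_of_mem_erase hj)
    _ ≤ ∑ j : Fin n, ((3 : ℝ) ^ ((j : ℕ) + 1))⁻¹ :=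
        Finset.sum_le_sum_of_subset_of_nonneg (Finset.erase_subset _ _) fun _ _ _ => by positivity
    _ ≤ 1 / 2 := sum_inv_three_pow_succ_le n
    _ = RCLike.re (X k k) := by simp [hX]
end

section
/- The qubit map Φ defined by Φ(ρ) = (1/2) [[ρ₁₁+ρ₂₂, -ρ₁₁+ρ₂₂], [-ρ₁₁+ρ₂₂, ρ₁₁+ρ₂₂]] is a linear map on ℂ^{2×2} that is trace-preserving and completely positive, but is not diagonalizable as a linear operator on ℂ^{2×2}. -/
/-!
Φ is ρ ↦ K₁ρK₁ᴴ + K₂ρK₂ᴴ with Kraus operators K₁ = [[1,0],[-1,0]]/√2 and K₂ = [[0,1],[0,1]]/√2,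
so its Choi matrix is a sum of rank-one positive matrices. Moreover Φ(Φ ρ) = (tr ρ / 2) • 1 and
Φ 1 = 1, so Φ³ = Φ² and Φ² - Φ is a nonzero nilpotent. In an eigenbasis of Φ the map Φ² - Φ would
act diagonally, and a diagonalizable nilpotent map is zero.
-/

open scoped ComplexOrder

namespace Module.Basis

variable {ι K V : Type*} [Field K] [AddCommGroup V] [Module K V]

theorem eq_zero_of_isNilpotent_of_apply_eq_smul (b : Basis ι K V) {f : Module.End K V}
    (hf : IsNilpotent f) {μ : ι → K} (hb : ∀ i, f (b i) = μ i • b i) : f = 0 := by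
  obtain ⟨n, hn⟩ := hf
  refine b.ext fun i => ?_
  have hv : f.HasEigenvector (μ i) (b i) :=
    Module.End.hasEigenvector_iff.2 ⟨Module.End.mem_eigenspace_iff.2 (hb i), b.ne_zero i⟩
  have hμn : μ i ^ n • b i = 0 := by rw [← hv.pow_apply, hn, LinearMap.zero_apply]
  have hμ : μ i = 0 := eq_zero_of_pow_eq_zero ((smul_eq_zero.mp hμn).resolve_right (b.ne_zero i))
  rw [hb i, hμ, zero_smul, LinearMap.zero_apply]

end Module.Basis

namespace Matrix

variable {m n R : Type*} [Fintype n] [DecidableEq n] [CommRing R] [StarRing R]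

def conjMap [Fintype m] (K : Matrix m n R) : Matrix n n R →ₗ[R] Matrix m m R where
  toFun ρ := K * ρ * Kᴴ
  map_add' _ _ := by rw [Matrix.mul_add, Matrix.add_mul]
  map_smul' _ _ := by simp

@[simps]
def choiMatrix : (Matrix n n R →ₗ[R] Matrix m m R) →ₗ[R] Matrix (n × m) (n × m) R where
  toFun Φ := of fun p q => Φ (single p.1 q.1 1) p.2 q.2
  map_add' _ _ := rfl
  map_smul' _ _ := rfl

theorem choiMatrix_conjMap [Fintype m] (K : Matrix m n R) :
    choiMatrix (conjMap K) = vecMulVec (fun p => K p.2 p.1) (star fun p => K p.2 p.1) := by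
  ext ⟨j, a⟩ ⟨k, b⟩
  simp [conjMap, vecMulVec_apply, mul_apply, single_apply, ite_and]

theorem posSemidef_choiMatrix_conjMap [Fintype m] [PartialOrder R] [StarOrderedRing R]
    (K : Matrix m n R) : (choiMatrix (conjMap K)).PosSemidef := by
  rw [choiMatrix_conjMap]
  exact posSemidef_vecMulVec_self_star _

end Matrix

open Matrix

noncomputable def qubitMap : Matrix (Fin 2) (Fin 2) ℂ →ₗ[ℂ] Matrix (Fin 2) (Fin 2) ℂ :=
  (2⁻¹ : ℂ) • (conjMap !![1, 0; -1, 0] + conjMap !![0, 1; 0, 1])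

theorem qubitMap_apply (ρ : Matrix (Fin 2) (Fin 2) ℂ) :
    qubitMap ρ = (2⁻¹ : ℂ) • !![ρ 0 0 + ρ 1 1, -ρ 0 0 + ρ 1 1; -ρ 0 0 + ρ 1 1, ρ 0 0 + ρ 1 1] := by
  ext i j
  fin_cases i <;> fin_cases j <;>
    simp [qubitMap, conjMap, mul_apply, Fin.sum_univ_two, conjTranspose_apply, -cons_mul] <;> ring

theorem trace_qubitMap (ρ : Matrix (Fin 2) (Fin 2) ℂ) : (qubitMap ρ).trace = ρ.trace := by
  simp [qubitMap_apply, trace_fin_two]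
  ring

theorem posSemidef_choiMatrix_qubitMap : (choiMatrix qubitMap).PosSemidef := by
  rw [qubitMap, map_smul, map_add]
  exact ((posSemidef_choiMatrix_conjMap _).add (posSemidef_choiMatrix_conjMap _)).smul
    (by positivity)

theorem qubitMap_one : qubitMap 1 = 1 := by
  ext i j
  fin_cases i <;> fin_cases j <;> norm_num [qubitMap_apply]

theorem qubitMap_qubitMap (ρ : Matrix (Fin 2) (Fin 2) ℂ) :
    qubitMap (qubitMap ρ) = (2⁻¹ * ρ.trace) • 1 := by
  ext i j
  fin_cases i <;> fin_cases j <;> simp [qubitMap_apply, trace_fin_two] <;> ring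

theorem qubitMap_pow_three : qubitMap ^ 3 = qubitMap ^ 2 := by
  ext1 ρ
  simp only [pow_succ, pow_zero, one_mul, Module.End.mul_apply, qubitMap_qubitMap, map_smul,
    qubitMap_one]

theorem sq_sub_self_sq_eq_zero {R : Type*} [Ring R] {a : R} (h : a ^ 3 = a ^ 2) :
    (a ^ 2 - a) ^ 2 = 0 := by
  have h3 : a ^ 2 * a = a ^ 2 := by rw [← pow_succ, h]
  have h4 : a ^ 2 * a ^ 2 = a ^ 2 := by rw [← pow_add, pow_succ, h, h3]
  rw [sq (a ^ 2 - a), sub_mul, mul_sub, mul_sub, h4, h3, ← pow_succ', h, ← sq, sub_self]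

theorem isNilpotent_qubitMap_sq_sub : IsNilpotent (qubitMap ^ 2 - qubitMap) :=
  ⟨2, sq_sub_self_sq_eq_zero qubitMap_pow_three⟩

theorem qubitMap_sq_sub_ne_zero : qubitMap ^ 2 - qubitMap ≠ 0 := by
  intro h
  have := congrArg (fun f => f (single 0 0 1) 0 1) h
  norm_num [sq, qubitMap_qubitMap, qubitMap_apply] at this

/-- The qubit map `Φ(ρ) = (1/2)[[ρ₁₁+ρ₂₂, -ρ₁₁+ρ₂₂],[-ρ₁₁+ρ₂₂, ρ₁₁+ρ₂₂]]` is trace-preserving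
and completely positive (its Choi matrix is PSD), but not diagonalizable. -/
theorem stmt_8
    (Φ : Matrix (Fin 2) (Fin 2) ℂ →ₗ[ℂ] Matrix (Fin 2) (Fin 2) ℂ)
    (hΦ : ∀ ρ : Matrix (Fin 2) (Fin 2) ℂ,
      Φ ρ = (2⁻¹ : ℂ) • !![ρ 0 0 + ρ 1 1, -ρ 0 0 + ρ 1 1;
                           -ρ 0 0 + ρ 1 1, ρ 0 0 + ρ 1 1]) :
    (∀ ρ : Matrix (Fin 2) (Fin 2) ℂ, (Φ ρ).trace = ρ.trace) ∧
    (Matrix.of fun p q : Fin 2 × Fin 2 =>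
        (Φ (Matrix.single p.1 q.1 1)) p.2 q.2).PosSemidef ∧
    ¬ ∃ (b : Module.Basis (Fin 4) ℂ (Matrix (Fin 2) (Fin 2) ℂ)) (μ : Fin 4 → ℂ),
        ∀ i, Φ (b i) = μ i • b i := by
  obtain rfl : Φ = qubitMap := LinearMap.ext fun ρ => (hΦ ρ).trans (qubitMap_apply ρ).symm
  refine ⟨trace_qubitMap, posSemidef_choiMatrix_qubitMap, ?_⟩
  rintro ⟨b, μ, hb⟩
  refine qubitMap_sq_sub_ne_zero (b.eq_zero_of_isNilpotent_of_apply_eq_smul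
    isNilpotent_qubitMap_sq_sub (μ := fun i => μ i ^ 2 - μ i) fun i => ?_)
  simp [sq, hb, sub_smul, mul_smul]
end

section
/- Let C ⊆ L(V) be a convex set of endomorphisms of a finite-dimensional vector space containing some Z with squarefree characteristic polynomial. Then the set of diagonalizable elements of C is dense in C. -/
/-!
Along the segment `t ↦ X + t • (Z - X)` the characteristic polynomial is a monic polynomial
`P` over `ℂ[t]`, and its specialization at `t` is separable exactly when the resultant of `P`
and `P'`, a polynomial in `t`, does not vanish at `t`. That resultant is nonzero at `t = 1`
(where the segment reaches `Z`), so it has finitely many roots; hence for all small `τ > 0`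
the point `X + τ • (Z - X)` lies in `C`, is close to `X` and has `dim V` distinct eigenvalues,
so its eigenvectors form a basis.
-/
open Polynomial Filter Topology

namespace Polynomial

theorem Monic.resultant_derivative_map {R S : Type*} [CommRing R] [CommRing S]
    [IsAddTorsionFree R] [IsAddTorsionFree S] [Nontrivial S] {P : R[X]} (hP : P.Monic)
    (φ : R →+* S) :
    (P.map φ).resultant (P.map φ).derivative = φ (P.resultant P.derivative) := by
  rw [← resultant_map_map, natDegree_derivative, natDegree_derivative, hP.natDegree_map,
    derivative_map]

theorem Monic.separable_iff_resultant_derivative_ne_zero {K : Type*} [Field K] {f : K[X]}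
    (hf : f.Monic) : f.Separable ↔ f.resultant f.derivative ≠ 0 := by
  rw [Separable, ← isUnit_resultant_iff_isCoprime hf, isUnit_iff_ne_zero]

theorem Monic.finite_setOf_not_separable_map_eval {K : Type*} [Field K] [CharZero K]
    {P : K[X][X]} (hP : P.Monic) {c : K} (hc : (P.map (evalRingHom c)).Separable) :
    {t : K | ¬ (P.map (evalRingHom t)).Separable}.Finite := by
  have separable_iff (t : K) :
      (P.map (evalRingHom t)).Separable ↔ ¬ (P.resultant P.derivative).IsRoot t := by
    rw [(hP.map _).separable_iff_resultant_derivative_ne_zero, hP.resultant_derivative_map]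
    rfl
  have hne : P.resultant P.derivative ≠ 0 := fun h ↦
    (separable_iff c).mp hc (by rw [h, IsRoot, eval_zero])
  simpa only [separable_iff, not_not] using finite_setOfPred_isRoot hne

end Polynomial

theorem Matrix.charpoly_add_smul {n R : Type*} [Fintype n] [DecidableEq n] [CommRing R]
    (A B : Matrix n n R) (t : R) :
    (A + t • B).charpoly = (A.map C + (X : R[X]) • B.map C).charpoly.map (evalRingHom t) := by
  rw [← Matrix.charpoly_map]
  congr 1
  ext i j
  simp only [Matrix.map_apply, Matrix.add_apply, Matrix.smul_apply, smul_eq_mul, coe_evalRingHom,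
    eval_add, eval_mul, eval_C, eval_X]

theorem LinearMap.finite_setOf_not_separable_charpoly_add_smul {K V : Type*} [Field K]
    [CharZero K] [AddCommGroup V] [Module K V] [FiniteDimensional K V] (f g : Module.End K V)
    {c : K} (hc : (f + c • g).charpoly.Separable) :
    {t : K | ¬ (f + t • g).charpoly.Separable}.Finite := by
  let b := Module.finBasis K V
  have charpoly_eq (t : K) : (f + t • g).charpoly =
      ((toMatrix b b f).map C + (X : K[X]) • (toMatrix b b g).map C).charpoly.map
        (evalRingHom t) := by
    rw [← charpoly_toMatrix _ b, map_add, map_smul, Matrix.charpoly_add_smul]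
  simp only [charpoly_eq] at hc ⊢
  exact (Matrix.charpoly_monic _).finite_setOf_not_separable_map_eval hc

theorem Module.End.exists_eigenbasis_of_separable_charpoly {K V : Type*} [Field K]
    [AddCommGroup V] [Module K V] [FiniteDimensional K V] (f : Module.End K V)
    (hsplit : f.charpoly.Splits) (hsep : f.charpoly.Separable) :
    ∃ (b : Module.Basis (Fin (Module.finrank K V)) K V) (μ : Fin (Module.finrank K V) → K),
      ∀ i, f (b i) = μ i • b i := by
  classical
  let ι := {μ // μ ∈ f.charpoly.roots.toFinset}
  have card_ι : Fintype.card ι = Module.finrank K V := by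
    rw [Fintype.card_coe, Multiset.toFinset_card_of_nodup (nodup_roots hsep),
      splits_iff_card_roots.mp hsplit, LinearMap.charpoly_natDegree]
  have hasEigenvalue (μ : ι) : f.HasEigenvalue μ := by
    rw [hasEigenvalue_iff_isRoot_charpoly]
    exact isRoot_of_mem_roots (Multiset.mem_toFinset.mp μ.2)
  choose v hv using fun μ : ι ↦ (hasEigenvalue μ).exists_hasEigenvector
  let b := basisOfLinearIndependentOfCardEqFinrank'
    v (f.eigenvectors_linearIndependent' _ Subtype.coe_injective v hv) card_ι
  let e := Fintype.equivFinOfCardEq card_ι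
  refine ⟨b.reindex e, fun i ↦ e.symm i, fun i ↦ ?_⟩
  simpa [b] using (hv (e.symm i)).apply_eq_smul

/-- If a convex set `C` of endomorphisms of a finite-dimensional space contains an element
with squarefree characteristic polynomial, then the diagonalizable elements of `C`
(those admitting an eigenbasis) are dense in `C`. -/
theorem stmt_14 {V : Type*} [NormedAddCommGroup V] [NormedSpace ℂ V]
    [FiniteDimensional ℂ V]
    (C : Set (V →L[ℂ] V)) (hconv : Convex ℝ C)
    (Z : V →L[ℂ] V) (hZ : Z ∈ C)
    (hZsimple : Squarefree (LinearMap.charpoly (Z : V →ₗ[ℂ] V))) :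
    ∀ X ∈ C, ∀ ε : ℝ, 0 < ε → ∃ Y ∈ C, ‖X - Y‖ < ε ∧
      ∃ (b : Module.Basis (Fin (Module.finrank ℂ V)) ℂ V) (μ : Fin (Module.finrank ℂ V) → ℂ),
        ∀ i, Y (b i) = μ i • b i := by
  intro X hX ε hε
  let Y (τ : ℝ) : V →L[ℂ] V := X + τ • (Z - X)
  have separable_Y : ∀ᶠ τ in 𝓝[>] (0 : ℝ), (Y τ : Module.End ℂ V).charpoly.Separable := by
    let f : Module.End ℂ V := X
    let g : Module.End ℂ V := (Z - X : V →L[ℂ] V)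
    have coe_Y (τ : ℝ) : (Y τ : Module.End ℂ V) = f + (τ : ℂ) • g := by
      simp [Y, f, g, Complex.coe_smul]
    have bad_finite : {t : ℂ | ¬ (f + t • g).charpoly.Separable}.Finite :=
      LinearMap.finite_setOf_not_separable_charpoly_add_smul f g (c := 1)
        (by simpa [f, g, PerfectField.separable_iff_squarefree] using hZsimple)
    have good_eventually :
        ∀ᶠ τ : ℝ in 𝓝[>] 0, (τ : ℂ) ∉ {t | ¬ (f + t • g).charpoly.Separable} :=
      (bad_finite.preimage Complex.ofReal_injective.injOn).eventually_cofinite_notMem.filter_mono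
        ((nhdsGT_le_nhdsNE 0).trans (nhdsNE_le_cofinite 0))
    filter_upwards [good_eventually] with τ hτ
    simpa [coe_Y] using hτ
  have mem_C : ∀ᶠ τ in 𝓝[>] (0 : ℝ), Y τ ∈ C := by
    filter_upwards [Ioo_mem_nhdsGT one_pos] with τ hτ
    exact hconv.add_smul_sub_mem hX hZ (Set.Ioo_subset_Icc_self hτ)
  have close : ∀ᶠ τ in 𝓝[>] (0 : ℝ), ‖X - Y τ‖ < ε := by
    have : Tendsto Y (𝓝[>] 0) (𝓝 X) :=
      ((by fun_prop : Continuous Y).tendsto' 0 X (by simp [Y])).mono_left nhdsWithin_le_nhds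
    simpa [dist_eq_norm'] using this.eventually (Metric.ball_mem_nhds X hε)
  obtain ⟨τ, hsep, hmem, hclose⟩ := (separable_Y.and (mem_C.and close)).exists
  exact ⟨Y τ, hmem, hclose, Module.End.exists_eigenbasis_of_separable_charpoly _
    (IsAlgClosed.splits _) hsep⟩
end

section
/- The linear map Ψ on ℂ^{n×n} defined by Ψ(E_{jj}) = ∑_l A_{lj} E_{ll} with A = (1/2)(I + C) (C the cyclic shift), Ψ(E_{jk}) = (i/(2^j 3^k)) E_{jk} for j < k, and Ψ(E_{jk}) = (-i/(2^k 3^j)) E_{jk} for j > k, is trace-preserving and unital, and its n²×n² representation matrix has n² distinct eigenvalues. -/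
/-!
Ψ preserves the splitting of matrices into diagonal and off-diagonal parts. On the diagonal it
acts as `v ↦ A v`; since `A = (1 + C)/2` has column and row sums `1`, Ψ preserves the trace and
fixes `1`. For a primitive `n`-th root of unity `ζ`, the powers `(ζ^j)^l` form an eigenvector of
the cyclic shift `C`, so `diag((ζ^j)^l)` is an eigenvector of Ψ for `(1 + ζ^j)/2`; each `E_{jk}`,
`j ≠ k`, is an eigenvector for `± i/(2^a 3^b)`. These `n²` eigenvalues are distinct: the
off-diagonal ones by unique factorisation, and the two kinds because the points `(1 + z)/2`,
`|z| = 1`, meet the imaginary axis only at `0`. A characteristic polynomial of degree `n²` with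
`n²` distinct roots is squarefree.
-/

open Complex

namespace Polynomial

theorem squarefree_of_injective_isRoot {K ι : Type*} [Field K] [Fintype ι] {p : K[X]}
    (hp : p ≠ 0) (μ : ι → K) (hμ : Function.Injective μ) (hroot : ∀ i, p.IsRoot (μ i))
    (hdeg : p.natDegree ≤ Fintype.card ι) : Squarefree p := by
  classical
  have hnodup : (Finset.univ.val.map μ).Nodup := Finset.univ.nodup.map hμ
  have hle : Finset.univ.val.map μ ≤ p.roots :=
    (Multiset.le_iff_subset hnodup).2 fun x hx => by
      obtain ⟨i, -, rfl⟩ := Multiset.mem_map.1 hx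
      exact (mem_roots hp).2 (hroot i)
  have hroots : Finset.univ.val.map μ = p.roots :=
    Multiset.eq_of_le_of_card_le hle (by simpa using (card_roots' p).trans hdeg)
  have hsplit : p.Splits := splits_iff_card_roots.2 <|
    (card_roots' p).antisymm (by simpa [← hroots] using hdeg)
  exact ((nodup_roots_iff_of_splits hp hsplit).1 (hroots ▸ hnodup)).squarefree

end Polynomial

namespace Module.End

theorem squarefree_charpoly_of_injective_hasEigenvalue {K V ι : Type*} [Field K]
    [AddCommGroup V] [Module K V] [FiniteDimensional K V] [Fintype ι] (f : End K V)
    (μ : ι → K) (hμ : Function.Injective μ) (hμf : ∀ i, f.HasEigenvalue (μ i))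
    (hcard : Module.finrank K V ≤ Fintype.card ι) : Squarefree f.charpoly :=
  Polynomial.squarefree_of_injective_isRoot f.charpoly_monic.ne_zero μ hμ
    (fun i => (hasEigenvalue_iff_isRoot_charpoly f _).1 (hμf i))
    (by rwa [LinearMap.charpoly_natDegree])

theorem hasEigenvalue_of_apply_eq_smul {K V : Type*} [CommRing K] [AddCommGroup V] [Module K V]
    {f : End K V} {μ : K} {x : V} (hx : x ≠ 0) (h : f x = μ • x) : f.HasEigenvalue μ :=
  hasEigenvalue_of_hasEigenvector ⟨mem_eigenspace_iff.2 h, hx⟩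

end Module.End

namespace Matrix

section LinearMapsOfMatrices

variable {m R : Type*} [Fintype m] [DecidableEq m] [CommSemiring R]

theorem trace_map_eq_of_trace_map_single (Ψ : Matrix m m R →ₗ[R] Matrix m m R)
    (h : ∀ j k, (Ψ (single j k 1)).trace = (single j k (1 : R)).trace) (ρ : Matrix m m R) :
    (Ψ ρ).trace = ρ.trace := by
  suffices traceLinearMap m R R ∘ₗ Ψ = traceLinearMap m R R from LinearMap.congr_fun this ρ
  exact ext_linearMap R fun j k => LinearMap.ext_ring (by simpa using h j k)

theorem map_diagonal_eq_diagonal_mulVec (Ψ : Matrix m m R →ₗ[R] Matrix m m R)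
    (A : Matrix m m R) (h : ∀ j, Ψ (single j j 1) = ∑ l, A l j • single l l 1) (v : m → R) :
    Ψ (diagonal v) = diagonal (A *ᵥ v) := by
  have hdiag : ∀ w : m → R, diagonal w = ∑ j, w j • single j j 1 := fun w => by
    simp only [smul_single, smul_eq_mul, mul_one, sum_single_eq_diagonal]
  rw [hdiag, hdiag, map_sum]
  simp only [map_smul, h, Finset.smul_sum, smul_smul, mulVec, dotProduct, Finset.sum_smul]
  rw [Finset.sum_comm]
  simp only [mul_comm]

end LinearMapsOfMatrices

variable {n : ℕ} {R K : Type*}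

def cyclicShift (n : ℕ) (R : Type*) [Zero R] [One R] : Matrix (Fin n) (Fin n) R :=
  of fun j k => if (k : ℕ) = ((j : ℕ) + 1) % n then 1 else 0

theorem cyclicShift_apply_eq_ite [Zero R] [One R] [NeZero n] (j k : Fin n) :
    cyclicShift n R j k = if k = j + 1 then 1 else 0 := by
  simp only [cyclicShift, of_apply, Fin.ext_iff, Fin.val_add, Fin.val_one', Nat.add_mod_mod]

theorem sum_cyclicShift_apply [AddCommMonoidWithOne R] (j : Fin n) :
    ∑ l, cyclicShift n R l j = 1 := by
  have : NeZero n := NeZero.of_pos j.pos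
  simp only [cyclicShift_apply_eq_ite]
  exact (Equiv.sum_comp (Equiv.addRight (1 : Fin n)) fun m => if j = m then (1 : R) else 0).trans
    (by simp)

theorem cyclicShift_mulVec_pow [Semiring R] {z : R} (hz : z ^ n = 1) :
    cyclicShift n R *ᵥ (fun j : Fin n => z ^ (j : ℕ)) = z • fun j : Fin n => z ^ (j : ℕ) := by
  ext j
  have : NeZero n := NeZero.of_pos j.pos
  simp only [mulVec, dotProduct, cyclicShift_apply_eq_ite, ite_mul, one_mul, zero_mul,
    Finset.sum_ite_eq', Finset.mem_univ, if_true, Pi.smul_apply, smul_eq_mul]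
  rw [Fin.val_add, Fin.val_one', Nat.add_mod_mod, ← pow_eq_pow_mod _ hz, pow_succ']

noncomputable def lazyCyclicShift (n : ℕ) (K : Type*) [Field K] : Matrix (Fin n) (Fin n) K :=
  (2⁻¹ : K) • (1 + cyclicShift n K)

theorem sum_lazyCyclicShift_apply [Field K] [NeZero (2 : K)] (j : Fin n) :
    ∑ l, lazyCyclicShift n K l j = 1 := by
  simp only [lazyCyclicShift, smul_apply, add_apply, smul_eq_mul, ← Finset.mul_sum,
    Finset.sum_add_distrib, sum_cyclicShift_apply, one_apply, Finset.sum_ite_eq',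
    Finset.mem_univ, if_true]
  rw [one_add_one_eq_two, inv_mul_cancel₀ two_ne_zero]

theorem lazyCyclicShift_mulVec_pow [Field K] {z : K} (hz : z ^ n = 1) :
    lazyCyclicShift n K *ᵥ (fun j : Fin n => z ^ (j : ℕ)) =
      ((1 + z) / 2) • fun j : Fin n => z ^ (j : ℕ) := by
  rw [lazyCyclicShift, smul_mulVec, add_mulVec, one_mulVec, cyclicShift_mulVec_pow hz,
    div_eq_inv_mul, ← smul_smul, add_smul, one_smul]

theorem lazyCyclicShift_mulVec_one [Field K] [NeZero (2 : K)] :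
    lazyCyclicShift n K *ᵥ (fun _ => 1) = fun _ => 1 := by
  simpa [div_self (two_ne_zero' K)] using lazyCyclicShift_mulVec_pow (n := n) (one_pow (M := K) n)

end Matrix

theorem Nat.two_pow_mul_three_pow_inj {a b c d : ℕ} (h : 2 ^ a * 3 ^ b = 2 ^ c * 3 ^ d) :
    a = c ∧ b = d := by
  have h2 := congrArg (fun m => m.factorization 2) h
  have h3 := congrArg (fun m => m.factorization 3) h
  simp [Nat.factorization_mul, Nat.prime_two.factorization_pow,
    Nat.prime_three.factorization_pow] at h2 h3
  exact ⟨h2, h3⟩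

theorem Complex.one_add_div_two_eq_zero_of_re_eq_zero {z : ℂ} (hz : ‖z‖ = 1)
    (hre : ((1 + z) / 2).re = 0) : (1 + z) / 2 = 0 := by
  have hzre : z.re = -1 := by
    simp only [div_ofNat_re, add_re, one_re, div_eq_zero_iff, OfNat.ofNat_ne_zero, or_false] at hre
    linarith
  have hzim : z.im = 0 := by
    have := Complex.sq_norm z
    rw [hz, normSq_apply, hzre] at this
    nlinarith
  have : z = -1 := Complex.ext (by simp [hzre]) (by simp [hzim])
  simp [this]

theorem I_div_two_pow_mul_three_pow (a b : ℕ) :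
    I / (2 ^ a * 3 ^ b) = I / ((2 ^ a * 3 ^ b : ℕ) : ℂ) := by
  push_cast; rfl

-- 0-based indices: the paper's `i/(2^j 3^k)` for 1-based `j < k`.
noncomputable def offDiagEigenvalue (j k : ℕ) : ℂ :=
  if j < k then I / (2 ^ (j + 1) * 3 ^ (k + 1)) else -(I / (2 ^ (k + 1) * 3 ^ (j + 1)))

theorem offDiagEigenvalue_re (j k : ℕ) : (offDiagEigenvalue j k).re = 0 := by
  unfold offDiagEigenvalue
  split_ifs <;> simp [I_div_two_pow_mul_three_pow]

theorem offDiagEigenvalue_im (j k : ℕ) : (offDiagEigenvalue j k).im =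
    if j < k then ((2 ^ (j + 1) * 3 ^ (k + 1) : ℕ) : ℝ)⁻¹
    else -((2 ^ (k + 1) * 3 ^ (j + 1) : ℕ) : ℝ)⁻¹ := by
  unfold offDiagEigenvalue
  split_ifs <;> simp [I_div_two_pow_mul_three_pow]

theorem offDiagEigenvalue_ne_zero (j k : ℕ) : offDiagEigenvalue j k ≠ 0 := by
  unfold offDiagEigenvalue
  split_ifs <;> simp

theorem offDiagEigenvalue_inj {j k j' k' : ℕ} (h : j ≠ k) (h' : j' ≠ k')
    (he : offDiagEigenvalue j k = offDiagEigenvalue j' k') : j = j' ∧ k = k' := by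
  have him := congrArg im he
  simp only [offDiagEigenvalue_im] at him
  rcases h.lt_or_gt with hjk | hjk <;> rcases h'.lt_or_gt with hjk' | hjk'
  · simp only [if_pos hjk, if_pos hjk', inv_inj, Nat.cast_inj] at him
    have := Nat.two_pow_mul_three_pow_inj him
    omega
  · simp only [if_pos hjk, if_neg hjk'.not_gt] at him
    exact absurd him ((neg_lt_zero.2 (by positivity)).trans (by positivity)).ne'
  · simp only [if_neg hjk.not_gt, if_pos hjk'] at him
    exact absurd him ((neg_lt_zero.2 (by positivity)).trans (by positivity)).ne
  · simp only [if_neg hjk.not_gt, if_neg hjk'.not_gt, neg_inj, inv_inj, Nat.cast_inj] at him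
    have := Nat.two_pow_mul_three_pow_inj him
    omega

noncomputable def psiEigenvalue {n : ℕ} (ζ : ℂ) (p : Fin n × Fin n) : ℂ :=
  if p.1 = p.2 then (1 + ζ ^ (p.1 : ℕ)) / 2 else offDiagEigenvalue p.1 p.2

theorem psiEigenvalue_injective {n : ℕ} {ζ : ℂ} (hζ : IsPrimitiveRoot ζ n) :
    Function.Injective (psiEigenvalue (n := n) ζ) := by
  have hne (j : Fin n) (a b : ℕ) : (1 + ζ ^ (j : ℕ)) / 2 ≠ offDiagEigenvalue a b := fun he =>
    have hnorm : ‖ζ ^ (j : ℕ)‖ = 1 := by rw [norm_pow, hζ.norm'_eq_one j.pos.ne', one_pow]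
    offDiagEigenvalue_ne_zero a b <| he ▸
      one_add_div_two_eq_zero_of_re_eq_zero hnorm (he ▸ offDiagEigenvalue_re a b)
  rintro ⟨j, k⟩ ⟨j', k'⟩ he
  simp only [psiEigenvalue] at he
  by_cases h : j = k <;> by_cases h' : j' = k' <;> simp only [h, h', if_true, if_false] at he
  · obtain rfl := h
    obtain rfl := h'
    have : ζ ^ (j : ℕ) = ζ ^ (j' : ℕ) := by linear_combination 2 * he
    rw [Fin.ext (hζ.pow_inj j.isLt j'.isLt this)]
  · exact (hne _ _ _ he).elim
  · exact (hne _ _ _ he.symm).elim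
  · obtain ⟨hj, hk⟩ := offDiagEigenvalue_inj (Fin.val_ne_of_ne h) (Fin.val_ne_of_ne h') he
    rw [Fin.ext hj, Fin.ext hk]

open Matrix

theorem hasEigenvalue_psiEigenvalue {n : ℕ} {ζ : ℂ} (hζ : IsPrimitiveRoot ζ n)
    {Ψ : Matrix (Fin n) (Fin n) ℂ →ₗ[ℂ] Matrix (Fin n) (Fin n) ℂ}
    (hdiag : ∀ v, Ψ (diagonal v) = diagonal (lazyCyclicShift n ℂ *ᵥ v))
    (hoff : ∀ j k : Fin n, j ≠ k →
      Ψ (single j k 1) = offDiagEigenvalue j k • single j k 1)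
    (p : Fin n × Fin n) : Module.End.HasEigenvalue Ψ (psiEigenvalue ζ p) := by
  obtain ⟨j, k⟩ := p
  by_cases h : j = k
  · subst h
    have hz : (ζ ^ (j : ℕ)) ^ n = 1 := by
      rw [← pow_mul, mul_comm, pow_mul, hζ.pow_eq_one, one_pow]
    rw [psiEigenvalue, if_pos rfl]
    refine Module.End.hasEigenvalue_of_apply_eq_smul (fun h0 => ?_)
      (by rw [hdiag, lazyCyclicShift_mulVec_pow hz, diagonal_smul])
    simpa [hζ.ne_zero j.pos.ne'] using congrFun (congrFun h0 j) j
  · rw [psiEigenvalue, if_neg h]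
    refine Module.End.hasEigenvalue_of_apply_eq_smul (fun h0 => ?_) (hoff j k h)
    simpa using congrFun (congrFun h0 j) k

/-- The map `Ψ` sending `E_{jj} ↦ ∑_l A_{lj} E_{ll}` (with `A = (1/2)(I + C)`, `C` the cyclic
shift), `E_{jk} ↦ (i/(2^j 3^k)) E_{jk}` for `j < k` and `E_{jk} ↦ (-i/(2^k 3^j)) E_{jk}` for
`j > k`, is trace-preserving and unital, and has `n²` distinct eigenvalues (its
characteristic polynomial, of degree `n²`, is squarefree). -/
theorem stmt_19 {n : ℕ} (hn : 0 < n)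
    (C : Matrix (Fin n) (Fin n) ℂ)
    (hC : ∀ j k : Fin n, C j k = if (k : ℕ) = ((j : ℕ) + 1) % n then 1 else 0)
    (A : Matrix (Fin n) (Fin n) ℂ) (hA : A = (2⁻¹ : ℂ) • (1 + C))
    (Ψ : Matrix (Fin n) (Fin n) ℂ →ₗ[ℂ] Matrix (Fin n) (Fin n) ℂ)
    (hΨ : ∀ j k : Fin n, Ψ (Matrix.single j k 1) =
        if j = k then ∑ l : Fin n, A l j • Matrix.single l l (1 : ℂ)
        else if (j : ℕ) < (k : ℕ) then
          (I / (2 ^ ((j : ℕ) + 1) * 3 ^ ((k : ℕ) + 1))) • Matrix.single j k (1 : ℂ)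
        else
          (-(I / (2 ^ ((k : ℕ) + 1) * 3 ^ ((j : ℕ) + 1)))) • Matrix.single j k (1 : ℂ)) :
    (∀ ρ : Matrix (Fin n) (Fin n) ℂ, (Ψ ρ).trace = ρ.trace) ∧
    Ψ 1 = 1 ∧
    Squarefree (LinearMap.charpoly Ψ) := by
  obtain rfl : C = cyclicShift n ℂ := ext hC
  obtain rfl : A = lazyCyclicShift n ℂ := hA
  have hdiag := map_diagonal_eq_diagonal_mulVec Ψ _ fun j => by simpa using hΨ j j
  have hoff (j k : Fin n) (h : j ≠ k) :
      Ψ (single j k 1) = offDiagEigenvalue j k • single j k 1 := by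
    rw [hΨ, if_neg h, offDiagEigenvalue, ite_smul]
  refine ⟨trace_map_eq_of_trace_map_single Ψ fun j k => ?_, ?_, ?_⟩
  · by_cases h : j = k
    · simp [hΨ, h, trace_sum, sum_lazyCyclicShift_apply]
    · simp [hoff j k h, trace_single_eq_of_ne _ _ _ h]
  · rw [← diagonal_one, hdiag, lazyCyclicShift_mulVec_one]
  · obtain ⟨ζ, hζ⟩ : ∃ ζ : ℂ, IsPrimitiveRoot ζ n := ⟨_, Complex.isPrimitiveRoot_exp n hn.ne'⟩
    exact Module.End.squarefree_charpoly_of_injective_hasEigenvalue Ψ _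
      (psiEigenvalue_injective hζ) (hasEigenvalue_psiEigenvalue hζ hdiag hoff)
      (by simp [Module.finrank_matrix])
end
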